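/- arXiv:2102.06055 — 2 statements merged into one kernel-verified Lean document; each statement's English description precedes it below -/
import Mathlib

section
/- Let σ = (σ₁,σ₂) ∈ ℤ² and let λ be a bipartition with charged symbol Λ of charge σ and composition ϖ_Λ = (ϖ₁ ≥ ϖ₂ ≥ ⋯). Let Ỹ(λ) be the extended Young diagram of λ, namely the set of boxes (x,y,j) with j ∈ {1,2}, x ≥ 1, y ∈ ℤ and y ≤ λ^j_x. Then for every α ∈ ℤ, the set {b ∈ Ỹ(λ) : co^σ(b) ≥ α} is finite and its cardinality equals Σ_k max(ϖ_k − α, 0) (a finite sum). -/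
open scoped Classical

noncomputable section

/-- A partition: an antitone, eventually zero sequence of natural numbers.
`parts k` is the `(k+1)`-st part `λ_{k+1}`. -/
structure YPartition where
  parts : ℕ → ℕ
  antitone' : Antitone parts
  exists_zero : ∃ N, parts N = 0

namespace YPartition

lemma sorted_getD_antitone {l : List ℕ} (h : l.Pairwise (· ≥ ·)) :
    Antitone (fun k => l.getD k 0) := by
  intro i j hij
  simp only
  rcases lt_or_ge j l.length with hj | hj
  · have hi : i < l.length := lt_of_le_of_lt hij hj
    rw [List.getD_eq_getElem l 0 hj, List.getD_eq_getElem l 0 hi]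
    rcases eq_or_lt_of_le hij with rfl | hlt
    · exact le_rfl
    · exact List.pairwise_iff_getElem.mp h i j hi hj hlt
  · rw [List.getD_eq_default l 0 hj]
    exact Nat.zero_le _

/-- The partition whose multiset of (nonzero) parts is the multiset of nonzero
elements of `m`. -/
def ofMul (m : Multiset ℕ) : YPartition where
  parts := fun k => ((m.sort (· ≤ ·)).reverse).getD k 0
  antitone' := by
    apply sorted_getD_antitone
    rw [List.pairwise_reverse]
    exact Multiset.pairwise_sort m (· ≤ ·)
  exists_zero := ⟨((m.sort (· ≤ ·)).reverse).length, List.getD_eq_default _ _ le_rfl⟩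

/-- The size `|λ|` of a partition: the sum of its parts. -/
def size (p : YPartition) : ℕ := ∑ i ∈ Finset.range (Nat.find p.exists_zero), p.parts i

lemma finite_gt (p : YPartition) (k : ℕ) : {i : ℕ | k < p.parts i}.Finite := by
  obtain ⟨N, hN⟩ := p.exists_zero
  apply (Set.finite_Iio N).subset
  intro i hi
  simp only [Set.mem_setOf_eq] at hi
  by_contra hc
  simp only [Set.mem_Iio, not_lt] at hc
  have := p.antitone' hc
  omega

/-- The conjugate (transpose) partition. -/
def conj (p : YPartition) : YPartition where
  parts := fun k => {i : ℕ | k < p.parts i}.ncard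
  antitone' := fun a b hab =>
    Set.ncard_le_ncard (fun i hi => lt_of_le_of_lt hab hi) (p.finite_gt a)
  exists_zero := by
    refine ⟨p.parts 0, ?_⟩
    have h : {i : ℕ | p.parts 0 < p.parts i} = ∅ := by
      ext i
      simp only [Set.mem_setOf_eq, Set.mem_empty_iff_false, iff_false, not_lt]
      exact p.antitone' (Nat.zero_le i)
    show {i : ℕ | p.parts 0 < p.parts i}.ncard = 0
    rw [h, Set.ncard_empty]

/-- The 180°-rotation of the complement of `p` inside the rectangle with
`rows` rows of length `c`: the partition `(c - p_rows, c - p_{rows-1}, …, c - p₁)`. -/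
def rotCompl (c rows : ℕ) (p : YPartition) : YPartition where
  parts := fun k => if k < rows then c - p.parts (rows - 1 - k) else 0
  antitone' := by
    intro a b hab
    by_cases hb : b < rows
    · have ha : a < rows := lt_of_le_of_lt hab hb
      simp only [if_pos hb, if_pos ha]
      exact Nat.sub_le_sub_left (p.antitone' (by omega)) c
    · simp only [if_neg hb]
      exact Nat.zero_le _
  exists_zero := ⟨rows, by simp⟩

end YPartition

/-- A bipartition: a pair of partitions. -/
abbrev Bipartition := YPartition × YPartition

/-- The size of a bipartition. -/
def Bipartition.size (l : Bipartition) : ℕ := l.1.size + l.2.size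

/-- The bipartition whose components have parts the multisets `a` and `b`. -/
def bip (a b : Multiset ℕ) : Bipartition := (YPartition.ofMul a, YPartition.ofMul b)

/-- The multiset of parts of the partition `a 1^b` (one part `a`, then `b` parts `1`). -/
def hook (a b : ℕ) : Multiset ℕ := a ::ₘ Multiset.replicate b 1

/-- The charged β-set of a partition, as a sequence:
`betaSet p s i = λ_{i+1} + s - (i+1) + 1`. -/
def betaSet (p : YPartition) (s : ℤ) (i : ℕ) : ℤ := (p.parts i : ℤ) + s - i

/-- The charged symbol of a bipartition with charge `σ`, as a pair of subsets of `ℤ`. -/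
def symbolOf (l : Bipartition) (σ : ℤ × ℤ) : Set ℤ × Set ℤ :=
  (Set.range (betaSet l.1 σ.1), Set.range (betaSet l.2 σ.2))

/-- The charge `σ_t`. -/
def sigmaT (t : ℕ) : ℤ × ℤ :=
  if Even t then ((t : ℤ), -1 - (t : ℤ)) else (-1 - (t : ℤ), (t : ℤ))

/-- The trivial symbol `({0,-1,-2,…},{-1,-2,-3,…})`, the symbol of the empty
bipartition with charge `σ₀ = (0,-1)`. -/
def trivialSymbol : Set ℤ × Set ℤ := ({z : ℤ | z ≤ 0}, {z : ℤ | z ≤ -1})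

/-- Removing one `n`-co-hook from the symbol `Λ`, yielding `Λ'`: remove `x+n` from one
row, adjoin `x` to the other row, and exchange the two rows. -/
def CohookStep (n : ℕ) (Λ Λ' : Set ℤ × Set ℤ) : Prop :=
  (∃ x : ℤ, x + n ∈ Λ.1 ∧ x ∉ Λ.2 ∧ Λ' = (Λ.2 ∪ {x}, Λ.1 \ {x + n})) ∨
  (∃ x : ℤ, x + n ∈ Λ.2 ∧ x ∉ Λ.1 ∧ Λ' = (Λ.2 \ {x + n}, Λ.1 ∪ {x}))

/-- `C` is the `n`-co-core of `Λ`: it is obtained from `Λ` by recursively removing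
`n`-co-hooks, and no further `n`-co-hook can be removed. -/
def IsCocore (n : ℕ) (Λ C : Set ℤ × Set ℤ) : Prop :=
  Relation.ReflTransGen (CohookStep n) Λ C ∧ ∀ C', ¬ CohookStep n C C'

/-- Number of entries of the charged β-set of `p` that are `≥ α` (with multiplicity). -/
def betaCountGE (p : YPartition) (s α : ℤ) : ℕ := Nat.card {i : ℕ // α ≤ betaSet p s i}

/-- Number of entries `≥ α`, with multiplicity, of the multiset union of the two rows
of the symbol of `l` with charge `σ`. -/
def symCountGE (l : Bipartition) (σ : ℤ × ℤ) (α : ℤ) : ℕ :=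
  betaCountGE l.1 σ.1 α + betaCountGE l.2 σ.2 α

/-- The composition `ϖ_Λ` of the symbol of `l` with charge `σ`: `comp l σ k` is the
`(k+1)`-st largest entry (with multiplicity) of the multiset union of the two rows. -/
def comp (l : Bipartition) (σ : ℤ × ℤ) (k : ℕ) : ℤ :=
  sSup {z : ℤ | k + 1 ≤ symCountGE l σ z}

/-- All partial sums of the composition of the symbol `(l,σ)` are bounded by those of
`(m,τ)`. -/
def DomLE (l : Bipartition) (σ : ℤ × ℤ) (m : Bipartition) (τ : ℤ × ℤ) : Prop :=
  ∀ j : ℕ, ∑ k ∈ Finset.range j, comp l σ k ≤ ∑ k ∈ Finset.range j, comp m τ k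

/-- Strict dominance `Λ ⊲ Λ'` of symbols: the compositions differ and all partial sums
of the first are bounded by those of the second. -/
def DomLT (l : Bipartition) (σ : ℤ × ℤ) (m : Bipartition) (τ : ℤ × ℤ) : Prop :=
  comp l σ ≠ comp m τ ∧ DomLE l σ m τ

/-- A box `(x, y, j)` (0-indexed row `x`, 0-indexed column `y`, component `j`:
`j = 0` is the first component, `j = 1` the second). -/
abbrev Box := ℕ × ℕ × Fin 2

/-- The component of a bipartition selected by `j : Fin 2`. -/
def Bipartition.partsOf (l : Bipartition) (j : Fin 2) : YPartition := if j = 0 then l.1 else l.2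

/-- Membership of a box in the Young diagram of a bipartition. -/
def MemY (l : Bipartition) (b : Box) : Prop := b.2.1 < (l.partsOf b.2.2).parts b.1

/-- The entry of the charge `σ` corresponding to component `j`. -/
def chargeOf (σ : ℤ × ℤ) (j : Fin 2) : ℤ := if j = 0 then σ.1 else σ.2

/-- The charged content `co^σ(b) = y - x + σ_j` of a box. -/
def content (σ : ℤ × ℤ) (b : Box) : ℤ := (b.2.1 : ℤ) - (b.1 : ℤ) + chargeOf σ b.2.2

/-- `j(b) ∈ {1,2}`: the component of a box, numbered 1 or 2. -/
def jval (b : Box) : ℕ := (b.2.2 : ℕ) + 1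

/-- The counting function of the Dunkl–Griffeth order. -/
def dgCount (l : Bipartition) (s : ℤ × ℤ) (d : ℕ) (α : ℝ) (j : ℕ) : ℕ :=
  Nat.card {b : Box // MemY l b ∧
    (α < (content s b : ℝ) - (jval b : ℝ) * (d : ℝ) / 2 ∨
      ((content s b : ℝ) - (jval b : ℝ) * (d : ℝ) / 2 = α ∧ jval b ≤ j))}

/-- The Dunkl–Griffeth order `λ ⪯_s μ` (with respect to `d`). -/
def DGLE (l m : Bipartition) (s : ℤ × ℤ) (d : ℕ) : Prop :=
  ∀ (α : ℝ), ∀ j ∈ ({1, 2} : Set ℕ), dgCount l s d α j ≤ dgCount m s d α j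

/-- A box of the extended Young diagram: rows are infinite to the left, so the column
coordinate is an integer.  `(x, y, j)` is the box in (0-indexed) row `x`, with integer
column coordinate `y` (`y = 0` is the first column), in component `j`. -/
abbrev ExtBox := ℕ × ℤ × Fin 2

/-- Membership in the extended Young diagram of a bipartition. -/
def MemExtY (l : Bipartition) (b : ExtBox) : Prop :=
  b.2.1 < ((l.partsOf b.2.2).parts b.1 : ℤ)

/-- The charged content of an extended box. -/
def contentExt (σ : ℤ × ℤ) (b : ExtBox) : ℤ := b.2.1 - (b.1 : ℤ) + chargeOf σ b.2.2

/-- `b` is a removable box of the bipartition `l`. -/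
def Removable (l : Bipartition) (b : Box) : Prop :=
  (l.partsOf b.2.2).parts b.1 = b.2.1 + 1 ∧ (l.partsOf b.2.2).parts (b.1 + 1) ≤ b.2.1

/-- `b` is an addable box of the bipartition `l`. -/
def Addable (l : Bipartition) (b : Box) : Prop :=
  (l.partsOf b.2.2).parts b.1 = b.2.1 ∧
    (b.1 = 0 ∨ b.2.1 + 1 ≤ (l.partsOf b.2.2).parts (b.1 - 1))

/-- The order in which boxes are listed in the `i`-word: increasing charged content,
a component-2 box preceding a component-1 box of equal charged content. -/
def BoxLT (σ : ℤ × ℤ) (b b' : Box) : Prop :=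
  content σ b < content σ b' ∨
    (content σ b = content σ b' ∧ b.2.2 = 1 ∧ b'.2.2 = 0)

/-- `L` is the list of boxes underlying the `i`-word of `(l, σ)` with respect to `d`:
it lists, in increasing order, exactly the addable and removable boxes of `l` whose
charged content is congruent to `i` modulo `d`. -/
def IsIWord (l : Bipartition) (σ : ℤ × ℤ) (d : ℕ) (i : ZMod d) (L : List Box) : Prop :=
  L.Pairwise (BoxLT σ) ∧
    ∀ b : Box, b ∈ L ↔ ((Addable l b ∨ Removable l b) ∧ ((content σ b : ZMod d) = i))

/-- The sign of a box in the `i`-word: `true` (`+`) for addable, `false` (`−`) for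
removable boxes. -/
def signOf (l : Bipartition) (b : Box) : Bool := if Addable l b then true else false

/-- One reduction step on words: delete an adjacent pair `−+`. -/
def RedStep (w w' : List Bool) : Prop :=
  ∃ u v : List Bool, w = u ++ false :: true :: v ∧ w' = u ++ v

/-- `ẽ_i l = 0`: the reduced `i`-word of `(l, σ)` contains no `−`, i.e. the `i`-word
reduces to a word consisting only of `+`'s. -/
def AnnihilatedE (l : Bipartition) (σ : ℤ × ℤ) (d : ℕ) (i : ZMod d) : Prop :=
  ∃ L : List Box, IsIWord l σ d i L ∧
    ∃ a : ℕ, Relation.ReflTransGen RedStep (L.map (signOf l)) (List.replicate a true)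

/-- `q` is obtained from the partition `p` by adding one box. -/
def PCovers (p q : YPartition) : Prop :=
  ∃ x : ℕ, q.parts x = p.parts x + 1 ∧ ∀ y : ℕ, y ≠ x → q.parts y = p.parts y

/-- `m` is obtained from the bipartition `l` by adding one box to its Young diagram. -/
def BipCovers (l m : Bipartition) : Prop :=
  (PCovers l.1 m.1 ∧ m.2 = l.2) ∨ (m.1 = l.1 ∧ PCovers l.2 m.2)

/-- `A(l) = Σ_μ μ`, the sum over all bipartitions obtained from `l` by adding one box,
as an element of the group of `ℤ`-valued functions on bipartitions. -/
def addB (l : Bipartition) : Bipartition → ℤ := fun m => if BipCovers l m then 1 else 0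

/-- The projection `π_S` onto the span of the bipartitions lying in `S`. -/
def projS (S : Set Bipartition) (f : Bipartition → ℤ) : Bipartition → ℤ :=
  fun m => if m ∈ S then f m else 0

/-- The basis element of `ℤ[BP]` corresponding to a bipartition. -/
def deltaB (l : Bipartition) : Bipartition → ℤ := fun m => if m = l then 1 else 0

/-- The bipartitions of `2n` labelling the principal-series unipotent characters in
the principal `Φ_{2n}`-block. -/
def PS (n : ℕ) : Set Bipartition :=
  {l | (∃ i j : ℕ, 0 < i ∧ i < n ∧ j ≤ n ∧
          l = bip (hook (n - i) j) (hook (n - j + 1) (i - 1))) ∨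
       (∃ j : ℕ, j < 2 * n ∧ l = bip (hook (2 * n - j) j) 0) ∨
       (∃ i : ℕ, 0 < i ∧ i ≤ 2 * n ∧ l = bip 0 (hook (2 * n - i + 1) (i - 1)))}

/-- The bipartitions of `2n-2` labelling the `B₂`-series unipotent characters in the
principal `Φ_{2n}`-block: `2^i 1^{j-i-1} . (n-i-1)(n-j)` for `0 ≤ i < j ≤ n`. -/
def LB2 (n : ℕ) : Set Bipartition :=
  {l | ∃ i j : ℕ, i < j ∧ j ≤ n ∧
        l = bip (Multiset.replicate i 2 + Multiset.replicate (j - i - 1) 1)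
                {n - i - 1, n - j}}

/-- The bipartitions of `2n-6` labelling the `B₆`-series unipotent characters in the
principal `Φ_{2n}`-block: `(n-i-2)(n-j-1) . 2^{i-1} 1^{j-i-1}` for `0 < i < j < n`. -/
def LB6 (n : ℕ) : Set Bipartition :=
  {l | ∃ i j : ℕ, 0 < i ∧ i < j ∧ j < n ∧
        l = bip {n - i - 2, n - j - 1}
                (Multiset.replicate (i - 1) 2 + Multiset.replicate (j - i - 1) 1)}

end

/-!
Descending induction on `α`. The boxes of charged content exactly `α` lie one in each row
whose β-number exceeds `α`, so their number is the number of entries `≥ α + 1` of the symbol;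
by the definition of `ϖ` as the decreasing enumeration of those entries, `Σ_k max(ϖ_k - α, 0)`
grows by the same amount when `α + 1` is replaced by `α`. Both sides vanish once `α` bounds
every entry of the symbol.
-/

section BetaSet

variable (p : YPartition) (s : ℤ)

lemma betaSet_antitone : Antitone (betaSet p s) := fun i j hij => by
  have := p.antitone' hij
  unfold betaSet
  omega

lemma betaSet_le_betaSet_zero_sub (i : ℕ) : betaSet p s i ≤ betaSet p s 0 - i := by
  have := p.antitone' (Nat.zero_le i)
  unfold betaSet
  omega

lemma finite_setOf_le_betaSet (z : ℤ) : {i : ℕ | z ≤ betaSet p s i}.Finite :=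
  (Set.finite_Iic (betaSet p s 0 - z).toNat).subset fun i (hi : z ≤ betaSet p s i) => by
    have := betaSet_le_betaSet_zero_sub p s i
    rw [Set.mem_Iic]
    omega

instance finite_subtype_le_betaSet (z : ℤ) : Finite {i : ℕ // z ≤ betaSet p s i} :=
  (finite_setOf_le_betaSet p s z).to_subtype

lemma setOf_le_betaSet_eq_Iio (z : ℤ) :
    {i : ℕ | z ≤ betaSet p s i} = Set.Iio (betaCountGE p s z) := by
  have hlower : IsLowerSet {i : ℕ | z ≤ betaSet p s i} :=
    fun _ _ hji hi => hi.trans (betaSet_antitone p s hji)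
  obtain huniv | ⟨n, hn⟩ := hlower.eq_univ_or_Iio
  · exact absurd (huniv ▸ finite_setOf_le_betaSet p s z) Set.infinite_univ
  · rw [betaCountGE, ← Set.coe_ofPred, Nat.card_coe_set_eq, hn, Set.ncard_Iio_nat]

lemma le_betaSet_iff_lt_betaCountGE (z : ℤ) (i : ℕ) :
    z ≤ betaSet p s i ↔ i < betaCountGE p s z :=
  Set.ext_iff.mp (setOf_le_betaSet_eq_Iio p s z) i

lemma betaCountGE_antitone : Antitone (betaCountGE p s) := fun z z' hzz' => by
  rw [← Set.Iio_subset_Iio_iff, ← setOf_le_betaSet_eq_Iio, ← setOf_le_betaSet_eq_Iio]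
  exact fun _ hi => hzz'.trans hi

end BetaSet

lemma Int.le_csSup_iff_mem_of_isLowerSet {S : Set ℤ} (hS : IsLowerSet S) (hne : S.Nonempty)
    (hbdd : BddAbove S) {z : ℤ} : z ≤ sSup S ↔ z ∈ S :=
  ⟨fun h => hS h (Int.csSup_mem hne hbdd), fun h => le_csSup hbdd h⟩

section Composition

variable (l : Bipartition) (sg : ℤ × ℤ)

lemma symCountGE_eq_sum (z : ℤ) :
    symCountGE l sg z = ∑ j : Fin 2, betaCountGE (l.partsOf j) (chargeOf sg j) z := by
  simp [symCountGE, Fin.sum_univ_two, Bipartition.partsOf, chargeOf]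

lemma symCountGE_antitone : Antitone (symCountGE l sg) := fun _ _ h =>
  add_le_add (betaCountGE_antitone _ _ h) (betaCountGE_antitone _ _ h)

lemma symCountGE_eq_zero_of_forall_lt {z : ℤ}
    (h : ∀ j, betaSet (l.partsOf j) (chargeOf sg j) 0 < z) : symCountGE l sg z = 0 := by
  rw [symCountGE_eq_sum]
  refine Finset.sum_eq_zero fun j _ => ?_
  have := le_betaSet_iff_lt_betaCountGE (l.partsOf j) (chargeOf sg j) z 0
  have := h j
  omega

lemma le_comp_iff (k : ℕ) (z : ℤ) : z ≤ comp l sg k ↔ k + 1 ≤ symCountGE l sg z := by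
  obtain ⟨B, hB⟩ := Finite.exists_le fun j => betaSet (l.partsOf j) (chargeOf sg j) 0
  refine Int.le_csSup_iff_mem_of_isLowerSet
    (fun _ _ h hz => hz.trans (symCountGE_antitone l sg h)) ⟨betaSet l.1 sg.1 k, ?_⟩ ⟨B, ?_⟩
  · have := (le_betaSet_iff_lt_betaCountGE l.1 sg.1 _ k).mp le_rfl
    show k + 1 ≤ betaCountGE l.1 sg.1 _ + betaCountGE l.2 sg.2 _
    omega
  · intro z hz
    by_contra! hBz
    have := symCountGE_eq_zero_of_forall_lt l sg fun j => (hB j).trans_lt hBz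
    have hz : k + 1 ≤ symCountGE l sg z := hz
    omega

lemma summable_comp_sub_toNat (α : ℤ) : Summable fun k => (comp l sg k - α).toNat :=
  summable_of_ne_finset_zero (s := Finset.range (symCountGE l sg (α + 1))) fun k hk => by
    have := le_comp_iff l sg k (α + 1)
    rw [Finset.mem_range] at hk
    omega

lemma tsum_comp_sub_toNat_eq_add (α : ℤ) :
    ∑' k, (comp l sg k - α).toNat
      = ∑' k, (comp l sg k - (α + 1)).toNat + symCountGE l sg (α + 1) := by
  set N := symCountGE l sg (α + 1)
  have hterm : ∀ k, (comp l sg k - α).toNat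
      = (comp l sg k - (α + 1)).toNat + if k < N then 1 else 0 := fun k => by
    have := le_comp_iff l sg k (α + 1)
    split_ifs <;> omega
  have hind : Summable fun k => if k < N then 1 else 0 :=
    summable_of_ne_finset_zero (s := Finset.range N) fun k hk => by simp_all
  rw [tsum_congr hterm, (summable_comp_sub_toNat l sg _).tsum_add hind,
    tsum_eq_sum (s := Finset.range N) (f := fun k => if k < N then 1 else 0) fun k hk => by
      simp_all,
    Finset.sum_ite_of_true fun k hk => Finset.mem_range.mp hk]
  simp

lemma tsum_comp_sub_toNat_eq_zero {α : ℤ}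
    (h : ∀ j, betaSet (l.partsOf j) (chargeOf sg j) 0 ≤ α) :
    ∑' k, (comp l sg k - α).toNat = 0 := by
  have hzero := symCountGE_eq_zero_of_forall_lt l sg fun j => (h j).trans_lt (lt_add_one α)
  refine (tsum_congr fun k => ?_).trans tsum_zero
  have := le_comp_iff l sg k (α + 1)
  omega

end Composition

section ExtendedDiagram

variable (l : Bipartition) (sg : ℤ × ℤ)

def extBoxesGE (α : ℤ) : Set ExtBox := {b | MemExtY l b ∧ α ≤ contentExt sg b}

def extBoxesOfContent (α : ℤ) : Set ExtBox := {b | MemExtY l b ∧ contentExt sg b = α}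

lemma contentExt_lt_betaSet {b : ExtBox} (hb : MemExtY l b) :
    contentExt sg b < betaSet (l.partsOf b.2.2) (chargeOf sg b.2.2) b.1 := by
  unfold MemExtY at hb
  unfold contentExt betaSet
  omega

/-- Row `x` of component `j` contains a box of charged content `α` exactly when its β-number
exceeds `α`, and then exactly one. -/
def extBoxesOfContentEquiv (α : ℤ) :
    extBoxesOfContent l sg α ≃
      Σ j : Fin 2, {x : ℕ // α + 1 ≤ betaSet (l.partsOf j) (chargeOf sg j) x} where
  toFun b := ⟨b.1.2.2, b.1.1, by
    have := contentExt_lt_betaSet l sg b.2.1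
    rw [b.2.2] at this
    omega⟩
  invFun jx := ⟨(jx.2.1, α + jx.2.1 - chargeOf sg jx.1, jx.1), by
    have := jx.2.2
    unfold extBoxesOfContent MemExtY contentExt
    unfold betaSet at this
    constructor <;> dsimp only <;> omega⟩
  left_inv := by
    rintro ⟨⟨x, y, j⟩, hmem, hcontent⟩
    refine Subtype.ext (Prod.ext rfl (Prod.ext ?_ rfl))
    change α + x - chargeOf sg j = y
    unfold contentExt at hcontent
    dsimp only at hcontent
    omega
  right_inv _ := rfl

lemma extBoxesGE_eq_union (α : ℤ) :
    extBoxesGE l sg α = extBoxesGE l sg (α + 1) ∪ extBoxesOfContent l sg α := by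
  ext b
  simp only [extBoxesGE, extBoxesOfContent, Set.mem_union, Set.mem_ofPred_eq, ← and_or_left]
  exact and_congr_right fun _ => by omega

lemma finite_extBoxesOfContent (α : ℤ) : (extBoxesOfContent l sg α).Finite :=
  Set.finite_coe_iff.mp (Finite.of_equiv _ (extBoxesOfContentEquiv l sg α).symm)

lemma ncard_extBoxesOfContent (α : ℤ) :
    (extBoxesOfContent l sg α).ncard = symCountGE l sg (α + 1) := by
  rw [← Nat.card_coe_set_eq, Nat.card_congr (extBoxesOfContentEquiv l sg α), Nat.card_sigma,
    symCountGE_eq_sum]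
  rfl

lemma extBoxesGE_eq_empty {α : ℤ} (h : ∀ j, betaSet (l.partsOf j) (chargeOf sg j) 0 ≤ α) :
    extBoxesGE l sg α = ∅ :=
  Set.eq_empty_iff_forall_notMem.mpr fun b hb => by
    have := contentExt_lt_betaSet l sg hb.1
    have := betaSet_le_betaSet_zero_sub (l.partsOf b.2.2) (chargeOf sg b.2.2) b.1
    have := h b.2.2
    have := hb.2
    omega

lemma finite_and_ncard_extBoxesGE_of_succ {α : ℤ}
    (h : (extBoxesGE l sg (α + 1)).Finite ∧
      (extBoxesGE l sg (α + 1)).ncard = ∑' k, (comp l sg k - (α + 1)).toNat) :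
    (extBoxesGE l sg α).Finite ∧
      (extBoxesGE l sg α).ncard = ∑' k, (comp l sg k - α).toNat := by
  have hdisj : Disjoint (extBoxesGE l sg (α + 1)) (extBoxesOfContent l sg α) :=
    Set.disjoint_left.mpr fun b hb hb' => by
      have := hb.2
      have := hb'.2
      omega
  rw [extBoxesGE_eq_union, tsum_comp_sub_toNat_eq_add, ← h.2, ← ncard_extBoxesOfContent]
  exact ⟨h.1.union (finite_extBoxesOfContent l sg α),
    Set.ncard_union_eq hdisj h.1 (finite_extBoxesOfContent l sg α)⟩

end ExtendedDiagram

/-- For every `α ∈ ℤ`, the set of boxes of the extended Young diagram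
of `l` whose charged content is `≥ α` is finite, of cardinality `Σ_k max(ϖ_k - α, 0)`. -/
theorem decomposition_numbers_stmt1 (sg : ℤ × ℤ) (l : Bipartition) (α : ℤ) :
    {b : ExtBox | MemExtY l b ∧ α ≤ contentExt sg b}.Finite ∧
    {b : ExtBox | MemExtY l b ∧ α ≤ contentExt sg b}.ncard
      = ∑' k : ℕ, (comp l sg k - α).toNat := by
  obtain ⟨B, hB⟩ := Finite.exists_le fun j => betaSet (l.partsOf j) (chargeOf sg j) 0
  have base {α : ℤ} (hα : B ≤ α) : (extBoxesGE l sg α).Finite ∧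
      (extBoxesGE l sg α).ncard = ∑' k, (comp l sg k - α).toNat := by
    have h j := (hB j).trans hα
    rw [extBoxesGE_eq_empty l sg h, tsum_comp_sub_toNat_eq_zero l sg h]
    exact ⟨Set.finite_empty, Set.ncard_empty _⟩
  change (extBoxesGE l sg α).Finite ∧ (extBoxesGE l sg α).ncard = _
  rcases le_total B α with hα | hα
  · exact base hα
  induction α, hα using Int.leInductionDown with
  | base => exact base le_rfl
  | pred n _ ih =>
    rw [← sub_add_cancel n 1] at ih
    exact finite_and_ncard_extBoxesGE_of_succ l sg ih
end

section
/- Let n ≥ 2 and let S = PS(n). Then in the free abelian group ℤ[BP] on the set of bipartitions, π_S( Σ_{i=1}^{2n−1} (−1)^{i−1} A( i1^{2n−i−1}.∅ ) ) = 1^{2n}.∅ + 2n.∅ + (−1)^n (n−1)1^n.1. -/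
open scoped Classical

/-!
Each `i 1^(2n-i-1).∅` is a hook of size `2n - 1`. Adding a box lengthens its arm or its leg,
giving the hooks `(i+1) 1^(2n-i-1).∅` and `i 1^(2n-i).∅` of `PS(n)`; starts a second row of
length two, which no element of `PS(n)` has; or adds the box `1` to the second component, which
lands in `PS(n)` only for `i = n - 1`, as `(n-1) 1^n.1`. The alternating sum of the hooks
telescopes to the two extreme hooks `1^(2n).∅` and `2n.∅`.
-/

lemma YPartition.ext_parts {p q : YPartition} (h : p.parts = q.parts) : p = q := by
  cases p; cases q; simpa using h

lemma sum_Icc_neg_one_pow_smul_succ_add {M : Type*} [AddCommGroup M] (G : ℕ → M) (N : ℕ) :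
    ∑ i ∈ Finset.Icc 1 N, (-1 : ℤ) ^ (i - 1) • (G (i + 1) + G i) =
      G 1 + (-1 : ℤ) ^ (N + 1) • G (N + 1) := by
  induction N with
  | zero => simp
  | succ N ih =>
    rw [Finset.sum_Icc_succ_top (by omega), ih, Nat.add_sub_cancel, smul_add]
    simp only [pow_succ, mul_neg_one, neg_smul, neg_neg]
    abel

lemma projS_sum_smul {ι : Type*} (S : Set Bipartition) (s : Finset ι) (c : ι → ℤ)
    (f : ι → Bipartition → ℤ) :
    projS S (∑ i ∈ s, c i • f i) = ∑ i ∈ s, c i • projS S (f i) := by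
  funext m
  by_cases hm : m ∈ S <;> simp [projS, hm, Finset.sum_apply]

def hookParts (a b k : ℕ) : ℕ := if k = 0 then a else if k ≤ b then 1 else 0

lemma sort_hook {a : ℕ} (ha : 1 ≤ a) (b : ℕ) :
    (hook a b).sort (· ≤ ·) = List.replicate b 1 ++ [a] := by
  refine List.Perm.eq_of_pairwise' (r := (· ≤ ·)) (Multiset.pairwise_sort _ _) ?_ ?_
  · rw [List.pairwise_append]
    refine ⟨List.pairwise_replicate.2 (Or.inr le_rfl), by simp, ?_⟩
    intro x hx c hc
    rw [List.eq_of_mem_replicate hx, List.mem_singleton.1 hc]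
    exact ha
  · rw [← Multiset.coe_eq_coe, Multiset.sort_eq, hook, ← Multiset.coe_replicate,
      Multiset.cons_coe, Multiset.coe_eq_coe]
    exact (List.perm_append_singleton a _).symm

lemma parts_ofMul_hook {a : ℕ} (ha : 1 ≤ a) (b : ℕ) :
    (YPartition.ofMul (hook a b)).parts = hookParts a b := by
  funext k
  show ((hook a b).sort (· ≤ ·)).reverse.getD k 0 = hookParts a b k
  rw [sort_hook ha, List.reverse_append, List.reverse_replicate, List.reverse_singleton,
    List.singleton_append]
  rcases k with _ | k
  · simp [hookParts]
  · rw [List.getD_cons_succ, hookParts]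
    rcases Nat.lt_or_ge k b with hk | hk
    · rw [List.getD_eq_getElem _ 0 (by simpa using hk), List.getElem_replicate,
        if_neg k.succ_ne_zero, if_pos (show k + 1 ≤ b from hk)]
    · rw [List.getD_eq_default _ 0 (by simpa using hk), if_neg k.succ_ne_zero,
        if_neg (by omega)]

lemma parts_ofMul_zero : (YPartition.ofMul 0).parts = 0 := by
  funext k
  show ((0 : Multiset ℕ).sort (· ≤ ·)).reverse.getD k 0 = 0
  simp

lemma hook_zero_right (a : ℕ) : hook a 0 = {a} := rfl

lemma hook_one_left (b : ℕ) : hook 1 b = Multiset.replicate (b + 1) 1 := rfl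

lemma parts_ofMul_singleton_one : (YPartition.ofMul {1}).parts = hookParts 1 0 :=
  parts_ofMul_hook le_rfl 0

lemma pcovers_ofMul_hook_succ_left {a : ℕ} (ha : 1 ≤ a) (b : ℕ) :
    PCovers (YPartition.ofMul (hook a b)) (YPartition.ofMul (hook (a + 1) b)) := by
  refine ⟨0, ?_, fun y hy => ?_⟩ <;>
    simp only [parts_ofMul_hook ha, parts_ofMul_hook a.succ_pos, hookParts] <;> grind

lemma pcovers_ofMul_hook_succ_right {a : ℕ} (ha : 1 ≤ a) (b : ℕ) :
    PCovers (YPartition.ofMul (hook a b)) (YPartition.ofMul (hook a (b + 1))) := by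
  refine ⟨b + 1, ?_, fun y hy => ?_⟩ <;>
    simp only [parts_ofMul_hook ha, hookParts] <;> grind

lemma PCovers.of_ofMul_hook {a b : ℕ} (ha : 1 ≤ a) {q : YPartition}
    (h : PCovers (YPartition.ofMul (hook a b)) q) :
    q = YPartition.ofMul (hook (a + 1) b) ∨ q = YPartition.ofMul (hook a (b + 1)) ∨
      q.parts 1 = 2 := by
  obtain ⟨x, hx, hq⟩ := h
  rw [parts_ofMul_hook ha] at hx hq
  have hmono := q.antitone' (Nat.sub_le x 1)
  rcases Nat.eq_zero_or_pos x with rfl | hx0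
  · refine Or.inl (YPartition.ext_parts ?_)
    rw [parts_ofMul_hook a.succ_pos]
    funext y
    rcases Nat.eq_zero_or_pos y with rfl | hy
    · simp [hx, hookParts]
    · rw [hq y hy.ne']; simp [hookParts, hy.ne']
  · have hprev := hq (x - 1) (by omega)
    rcases Nat.lt_trichotomy x (b + 1) with hxb | rfl | hxb
    · refine Or.inr (Or.inr ?_)
      simp only [hookParts] at hx hprev
      grind
    · refine Or.inr (Or.inl (YPartition.ext_parts ?_))
      rw [parts_ofMul_hook ha]
      funext y
      by_cases hy : y = b + 1
      · subst hy; simp [hx, hookParts]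
      · rw [hq y hy]; simp only [hookParts]; grind
    · simp only [hookParts] at hx hprev
      grind

lemma pcovers_ofMul_zero_iff {q : YPartition} :
    PCovers (YPartition.ofMul 0) q ↔ q = YPartition.ofMul {1} := by
  constructor
  · rintro ⟨x, hx, hq⟩
    rw [parts_ofMul_zero] at hx hq
    have hx0 : x = 0 := by
      by_contra hx0
      have := q.antitone' (Nat.sub_le x 1)
      have := hq (x - 1) (by omega)
      simp_all
    subst hx0
    refine YPartition.ext_parts (funext fun y => ?_)
    rw [parts_ofMul_singleton_one]
    rcases Nat.eq_zero_or_pos y with rfl | hy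
    · simp [hx, hookParts]
    · rw [hq y hy.ne']; simp [hookParts, hy.ne']
  · rintro rfl
    refine ⟨0, ?_, fun y hy => ?_⟩ <;>
      simp [parts_ofMul_zero, parts_ofMul_singleton_one, hookParts, *]

lemma bip_hook_zero_mem_PS {n k : ℕ} (hk : 1 ≤ k) (hkn : k ≤ 2 * n) :
    bip (hook k (2 * n - k)) 0 ∈ PS n :=
  Or.inr (Or.inl ⟨2 * n - k, by omega, by rw [Nat.sub_sub_self hkn]⟩)

lemma bip_hook_singleton_mem_PS {n : ℕ} (hn : 2 ≤ n) : bip (hook (n - 1) n) {1} ∈ PS n :=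
  Or.inl ⟨1, n, one_pos, hn, le_rfl, by rw [Nat.sub_self]; rfl⟩

lemma parts_one_le_of_mem_PS {n : ℕ} {l : Bipartition} (hl : l ∈ PS n) : l.1.parts 1 ≤ 1 := by
  have hook_parts_one : ∀ {a} b, 1 ≤ a → (YPartition.ofMul (hook a b)).parts 1 ≤ 1 := by
    intro a b ha
    simp only [parts_ofMul_hook ha, hookParts]
    grind
  rcases hl with ⟨i, j, -, hin, -, rfl⟩ | ⟨j, hj, rfl⟩ | ⟨-, -, -, rfl⟩
  · exact hook_parts_one _ (by omega)
  · exact hook_parts_one _ (by omega)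
  · simp [bip, parts_ofMul_zero]

lemma eq_of_mem_PS_of_snd_eq {n : ℕ} {l : Bipartition} (hl : l ∈ PS n)
    (h2 : l.2 = YPartition.ofMul {1}) : l = bip (hook (n - 1) n) {1} := by
  have h2 := congrArg YPartition.parts h2
  rw [parts_ofMul_singleton_one] at h2
  rcases hl with ⟨i, j, hi, hin, hjn, rfl⟩ | ⟨j, hj, rfl⟩ | ⟨i, hi, hin, rfl⟩
  · rw [bip, parts_ofMul_hook (by omega)] at h2
    have hj : j = n := by have := congrFun h2 0; simp [hookParts] at this; omega
    have hi : i = 1 := by have := congrFun h2 1; simp [hookParts] at this; omega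
    subst hj hi
    rw [Nat.sub_self]
    rfl
  · have := congrFun h2 0
    simp [bip, parts_ofMul_zero, hookParts] at this
  · rw [bip, parts_ofMul_hook (by omega)] at h2
    have h0 := congrFun h2 0
    have h1 := congrFun h2 1
    simp [hookParts] at h0 h1
    omega

section AddBox

variable {n i : ℕ}

lemma mem_PS_and_bipCovers_hook_iff (hn : 2 ≤ n) (hi : 1 ≤ i) (hin : i ≤ 2 * n - 1)
    {m : Bipartition} :
    m ∈ PS n ∧ BipCovers (bip (hook i (2 * n - i - 1)) 0) m ↔
      m = bip (hook (i + 1) (2 * n - (i + 1))) 0 ∨ m = bip (hook i (2 * n - i)) 0 ∨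
        (i = n - 1 ∧ m = bip (hook (n - 1) n) {1}) := by
  have harm : 2 * n - (i + 1) = 2 * n - i - 1 := by omega
  have hleg : 2 * n - i = 2 * n - i - 1 + 1 := by omega
  constructor
  · rintro ⟨hm, ⟨h1, h2⟩ | ⟨h1, h2⟩⟩
    · rw [harm, hleg]
      rcases PCovers.of_ofMul_hook hi h1 with h | h | h
      · exact Or.inl (Prod.ext h h2)
      · exact Or.inr (Or.inl (Prod.ext h h2))
      · have := parts_one_le_of_mem_PS hm
        omega
    · have hD := eq_of_mem_PS_of_snd_eq hm (pcovers_ofMul_zero_iff.1 h2)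
      refine Or.inr (Or.inr ⟨?_, hD⟩)
      have h0 := congrFun (congrArg YPartition.parts (h1.symm.trans (congrArg Prod.fst hD))) 0
      simpa [bip, parts_ofMul_hook hi, parts_ofMul_hook (show 1 ≤ n - 1 by omega), hookParts]
        using h0
  · rintro (rfl | rfl | ⟨rfl, rfl⟩)
    · refine ⟨bip_hook_zero_mem_PS (by omega) (by omega), Or.inl ⟨?_, rfl⟩⟩
      rw [harm]
      exact pcovers_ofMul_hook_succ_left hi _
    · refine ⟨bip_hook_zero_mem_PS hi (by omega), Or.inl ⟨?_, rfl⟩⟩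
      rw [hleg]
      exact pcovers_ofMul_hook_succ_right hi _
    · refine ⟨bip_hook_singleton_mem_PS hn, Or.inr ⟨?_, pcovers_ofMul_zero_iff.2 rfl⟩⟩
      rw [show 2 * n - (n - 1) - 1 = n by omega]
      rfl

lemma bip_zero_ne_bip_singleton_one (a c : Multiset ℕ) : bip a 0 ≠ bip c {1} := fun h => by
  have h0 := congrFun (congrArg (fun l : Bipartition => l.2.parts) h) 0
  simp [bip, parts_ofMul_zero, parts_ofMul_singleton_one, hookParts] at h0

lemma projS_PS_addB_hook (hn : 2 ≤ n) (hi : 1 ≤ i) (hin : i ≤ 2 * n - 1) :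
    projS (PS n) (addB (bip (hook i (2 * n - i - 1)) 0)) =
      deltaB (bip (hook (i + 1) (2 * n - (i + 1))) 0) + deltaB (bip (hook i (2 * n - i)) 0) +
        if i = n - 1 then deltaB (bip (hook (n - 1) n) {1}) else 0 := by
  have hne : bip (hook (i + 1) (2 * n - (i + 1))) 0 ≠ bip (hook i (2 * n - i)) 0 := fun h => by
    have h0 := congrFun (congrArg (fun l : Bipartition => l.1.parts) h) 0
    simp [bip, parts_ofMul_hook hi, parts_ofMul_hook i.succ_pos, hookParts] at h0
  funext m
  have key := mem_PS_and_bipCovers_hook_iff hn hi hin (m := m)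
  simp only [projS, addB, ← ite_and, key, deltaB, Pi.add_apply, ite_apply, Pi.zero_apply]
  have hD := bip_zero_ne_bip_singleton_one
  have hD_symm := fun a c => (bip_zero_ne_bip_singleton_one a c).symm
  split_ifs <;> simp_all

end AddBox

/-- `π_S(Σ_{i=1}^{2n-1} (-1)^{i-1} A(i1^{2n-i-1}.∅))
  = 1^{2n}.∅ + 2n.∅ + (-1)^n (n-1)1^n.1` for `S = PS(n)`. -/
theorem decomposition_numbers_stmt12 (n : ℕ) (hn : 2 ≤ n) :
    projS (PS n)
        (∑ i ∈ Finset.Icc 1 (2 * n - 1),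
          ((-1 : ℤ) ^ (i - 1)) • addB (bip (hook i (2 * n - i - 1)) 0))
      = deltaB (bip (Multiset.replicate (2 * n) 1) 0) + deltaB (bip {2 * n} 0)
        + ((-1 : ℤ) ^ n) • deltaB (bip (hook (n - 1) n) {1}) := by
  set H : ℕ → Bipartition → ℤ := fun k => deltaB (bip (hook k (2 * n - k)) 0)
  set D := deltaB (bip (hook (n - 1) n) {1})
  have hterm : ∀ i ∈ Finset.Icc 1 (2 * n - 1),
      (-1 : ℤ) ^ (i - 1) • projS (PS n) (addB (bip (hook i (2 * n - i - 1)) 0)) =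
        (-1 : ℤ) ^ (i - 1) • (H (i + 1) + H i) +
          if i = n - 1 then (-1 : ℤ) ^ (i - 1) • D else 0 := by
    intro i hi
    rw [Finset.mem_Icc] at hi
    rw [projS_PS_addB_hook hn hi.1 hi.2, smul_add, smul_ite, smul_zero]
  rw [projS_sum_smul, Finset.sum_congr rfl hterm, Finset.sum_add_distrib,
    sum_Icc_neg_one_pow_smul_succ_add, Finset.sum_ite_eq',
    if_pos (Finset.mem_Icc.2 ⟨by omega, by omega⟩)]
  have h2n : 2 * n - 1 + 1 = 2 * n := by omega
  have hsign : (-1 : ℤ) ^ (n - 1 - 1) = (-1) ^ n := by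
    obtain ⟨k, rfl⟩ : ∃ k, n = k + 2 := ⟨n - 2, by omega⟩
    simp [pow_add]
  rw [h2n, hsign, (even_two_mul n).neg_one_pow, one_smul]
  simp only [H, Nat.sub_self, hook_zero_right, hook_one_left, h2n]
end
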